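/- arXiv:1712.09019 — 2 statements merged into one kernel-verified Lean document; each statement's English description precedes it below -/
import Mathlib

section
/- For every real number θ with 0 < θ < 1, the set of triples (n,x,y) of integers with n ≥ 3, max{|x|,|y|} ≥ 2 and Φ_n(x,y) ≤ 2^{θ·φ(n)} is finite, and every such triple satisfies max{|x|,|y|} = 2. -/
/-!
For `n ≥ 3`, `Φₙ(x, y) = ∏ (x - ζ y)` over the primitive `n`-th roots of unity `ζ`, and it is
positive. Pairing each factor with `2 (1 - ε ζ)` for a suitable sign `ε` gives
`Φₙ(x, y) ≥ 2^φ(n) |Φₙ(1, ε)| ≥ 2^φ(n)` whenever `|x| + |y| ≥ 4`; together with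
`Φₙ(x, 0) = x^φ(n)` and the symmetry `|Φₙ(x, y)| = |Φₙ(y, x)|`, this covers every pair with
`max(|x|, |y|) ≥ 3`, which therefore never satisfies the bound when `θ < 1`.
Up to symmetry, the pairs with `max(|x|, |y|) = 2` not covered this way are `(±2, ±1)`, where
`|Φₙ(x, y)| = |Φₙ(±2)|`. Möbius inversion of `log |t^d - 1| = d log |t| + O(|t|^{-d})` gives
`|Φₙ(t)| ≥ e^{-4} |t|^φ(n)` for `|t| ≥ 2`, so the bound caps `φ(n)` in terms of `θ`, and `n`
with it, as `n ≤ 2 φ(n)²`.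
-/

/-- The cyclotomic binary form `Φₙ(X,Y) = Y^{φ(n)} φₙ(X/Y)`, evaluated at integers. -/
noncomputable def cycBinaryForm (n : ℕ) (x y : ℤ) : ℤ :=
  ∑ i ∈ Finset.range (n.totient + 1),
    (Polynomial.cyclotomic n ℤ).coeff i * x ^ i * y ^ (n.totient - i)

open Polynomial Finset

lemma cycBinaryForm_zero_right (n : ℕ) (x : ℤ) : cycBinaryForm n x 0 = x ^ n.totient := by
  rw [cycBinaryForm, sum_eq_single_of_mem _ (self_mem_range_succ _)]
  · simp [← natDegree_cyclotomic n ℤ, (cyclotomic.monic n ℤ).coeff_natDegree]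
  · intro i hi hne
    have : n.totient - i ≠ 0 := by rw [mem_range] at hi; omega
    simp [this]

lemma cycBinaryForm_eq_mul_eval {K : Type*} [Field K] (n : ℕ) (x y : ℤ) (hy : (y : K) ≠ 0) :
    (cycBinaryForm n x y : K) = (y : K) ^ n.totient * (cyclotomic n K).eval ((x : K) / y) := by
  rw [eval_eq_sum_range, natDegree_cyclotomic, cycBinaryForm, mul_sum]
  push_cast
  refine sum_congr rfl fun i hi => ?_
  rw [← map_cyclotomic_int n K, coeff_map, eq_intCast,
    pow_sub₀ _ hy (Nat.le_of_lt_succ (mem_range.1 hi)), div_pow]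
  field_simp

lemma cycBinaryForm_eq_prod {n : ℕ} (hn : 0 < n) (x y : ℤ) :
    (cycBinaryForm n x y : ℂ) = ∏ ζ ∈ primitiveRoots n ℂ, ((x : ℂ) - ζ * y) := by
  have hζ := Complex.isPrimitiveRoot_exp n hn.ne'
  rcases eq_or_ne y 0 with rfl | hy
  · simp [cycBinaryForm_zero_right, hζ.card_primitiveRoots]
  · have hy' : (y : ℂ) ≠ 0 := Int.cast_ne_zero.2 hy
    rw [cycBinaryForm_eq_mul_eval n x y hy', cyclotomic_eq_prod_X_sub_primitiveRoots hζ,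
      eval_prod, ← hζ.card_primitiveRoots, ← prod_const, ← prod_mul_distrib]
    refine prod_congr rfl fun ζ _ => ?_
    simp only [eval_sub, eval_X, eval_C]
    field_simp

lemma abs_cycBinaryForm_eq_prod {n : ℕ} (hn : 0 < n) (x y : ℤ) :
    |(cycBinaryForm n x y : ℝ)| = ∏ ζ ∈ primitiveRoots n ℂ, ‖(x : ℂ) - ζ * y‖ := by
  rw [← norm_prod, ← cycBinaryForm_eq_prod hn, Complex.norm_intCast]

lemma cycBinaryForm_pos {n : ℕ} (hn : 2 < n) {x y : ℤ} (h : x ≠ 0 ∨ y ≠ 0) :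
    0 < cycBinaryForm n x y := by
  have heven := Nat.totient_even hn
  rcases eq_or_ne y 0 with rfl | hy
  · rw [cycBinaryForm_zero_right]
    exact heven.pow_pos (by simpa using h)
  · have hy' : (y : ℝ) ≠ 0 := Int.cast_ne_zero.2 hy
    have : (0 : ℝ) < cycBinaryForm n x y := by
      rw [cycBinaryForm_eq_mul_eval n x y hy']
      exact mul_pos (heven.pow_pos hy') (cyclotomic_pos hn _)
    exact_mod_cast this

lemma norm_eq_one_of_mem_primitiveRoots {n : ℕ} (hn : 0 < n) {ζ : ℂ}
    (hζ : ζ ∈ primitiveRoots n ℂ) : ‖ζ‖ = 1 :=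
  Complex.norm_eq_one_of_pow_eq_one ((mem_primitiveRoots hn).1 hζ).pow_eq_one hn.ne'

lemma abs_cycBinaryForm_comm {n : ℕ} (hn : 0 < n) (x y : ℤ) :
    |(cycBinaryForm n y x : ℝ)| = |(cycBinaryForm n x y : ℝ)| := by
  rw [abs_cycBinaryForm_eq_prod hn, abs_cycBinaryForm_eq_prod hn]
  refine prod_nbij' (·⁻¹) (·⁻¹) (fun ζ hζ => ?_) (fun ζ hζ => ?_) (fun ζ _ => inv_inv ζ)
    (fun ζ _ => inv_inv ζ) (fun ζ hζ => ?_)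
  · exact (mem_primitiveRoots hn).2 ((mem_primitiveRoots hn).1 hζ).inv
  · exact (mem_primitiveRoots hn).2 ((mem_primitiveRoots hn).1 hζ).inv
  · have hζ1 := norm_eq_one_of_mem_primitiveRoots hn hζ
    have hζ0 : ζ ≠ 0 := by rintro rfl; simp at hζ1
    rw [show (y : ℂ) - ζ * x = -ζ * (x - ζ⁻¹ * y) by field_simp; ring, norm_mul, norm_neg, hζ1,
      one_mul]

lemma abs_cycBinaryForm_of_abs_eq_one (n : ℕ) (x : ℤ) {y : ℤ} (hy : |y| = 1) :
    |(cycBinaryForm n x y : ℝ)| = |(cyclotomic n ℝ).eval ((x * y : ℤ) : ℝ)| := by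
  have hy' : |(y : ℝ)| = 1 := by exact_mod_cast hy
  have hyinv : (x : ℝ) / y = x * y := by
    rcases abs_eq_abs.1 (hy'.trans abs_one.symm) with h | h <;> simp [h, div_neg]
  rw [cycBinaryForm_eq_mul_eval n x y (by rintro h; simp [h] at hy'), abs_mul, abs_pow, hy',
    one_pow, one_mul, hyinv, Int.cast_mul]

lemma two_mul_norm_one_sub_le_norm_sub_mul {ζ : ℂ} (hζ : ‖ζ‖ = 1) {x y : ℝ} (h : 4 ≤ |x + y|) :
    2 * ‖1 - ζ‖ ≤ ‖(x : ℂ) - ζ * y‖ := by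
  have hre : |ζ.re| ≤ 1 := hζ ▸ Complex.abs_re_le_norm ζ
  have hnorm : ζ.re ^ 2 + ζ.im ^ 2 = 1 := by
    have := Complex.sq_norm ζ
    rw [hζ, Complex.normSq_apply] at this
    linear_combination -this
  have h16 : 16 ≤ (x + y) ^ 2 := by nlinarith [sq_abs (x + y)]
  rw [abs_le] at hre
  refine (pow_le_pow_iff_left₀ (by positivity) (norm_nonneg _) two_ne_zero).1 ?_
  rw [mul_pow, Complex.sq_norm, Complex.sq_norm, Complex.normSq_apply, Complex.normSq_apply]
  simp only [Complex.sub_re, Complex.sub_im, Complex.mul_re, Complex.mul_im, Complex.one_re,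
    Complex.one_im, Complex.ofReal_re, Complex.ofReal_im]
  -- the difference of the two sides is `(1 + c)/2 (x - y)² + (1 - c)/2 ((x + y)² - 16)`, `c = Re ζ`
  linarith [mul_nonneg (by linarith : 0 ≤ 1 + ζ.re) (sq_nonneg (x - y)),
    mul_nonneg (by linarith : 0 ≤ 1 - ζ.re) (by linarith : 0 ≤ (x + y) ^ 2 - 16),
    congrArg (· * (y ^ 2 - 4)) hnorm]

lemma two_pow_totient_le_abs_cycBinaryForm {n : ℕ} (hn : 2 < n) {x y : ℤ} (h : 4 ≤ |x| + |y|) :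
    (2 : ℝ) ^ n.totient ≤ |(cycBinaryForm n x y : ℝ)| := by
  obtain ⟨ε, hε, hxy⟩ : ∃ ε : ℤ, |ε| = 1 ∧ |x + ε * y| = |x| + |y| := by
    rcases le_total 0 x with hx | hx <;> rcases le_total 0 y with hy | hy
    exacts [⟨1, by grind⟩, ⟨-1, by grind⟩, ⟨-1, by grind⟩, ⟨1, by grind⟩]
  have hεε : (ε : ℂ) * ε = 1 := by
    rcases abs_eq_abs.1 (hε.trans abs_one.symm) with rfl | rfl <;> norm_num
  have hroot : ∀ ζ ∈ primitiveRoots n ℂ, 2 * ‖((1 : ℤ) : ℂ) - ζ * ε‖ ≤ ‖(x : ℂ) - ζ * y‖ := by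
    intro ζ hζ
    have hζ1 : ‖ζ * ε‖ = 1 := by
      rw [norm_mul, norm_eq_one_of_mem_primitiveRoots (by omega) hζ, Complex.norm_intCast, one_mul]
      exact_mod_cast hε
    have := two_mul_norm_one_sub_le_norm_sub_mul hζ1 (x := x) (y := ε * y)
      (by exact_mod_cast hxy ▸ h)
    push_cast at this ⊢
    rwa [mul_assoc, ← mul_assoc (ε : ℂ), hεε, one_mul] at this
  have hone : 1 ≤ |(cycBinaryForm n 1 ε : ℝ)| := by
    exact_mod_cast Int.one_le_abs (cycBinaryForm_pos hn (Or.inl one_ne_zero)).ne'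
  calc (2 : ℝ) ^ n.totient ≤ 2 ^ n.totient * |(cycBinaryForm n 1 ε : ℝ)| :=
        le_mul_of_one_le_right (by positivity) hone
    _ = ∏ ζ ∈ primitiveRoots n ℂ, 2 * ‖((1 : ℤ) : ℂ) - ζ * ε‖ := by
        rw [prod_mul_distrib, prod_const, Complex.card_primitiveRoots,
          abs_cycBinaryForm_eq_prod (by omega)]
    _ ≤ ∏ ζ ∈ primitiveRoots n ℂ, ‖(x : ℂ) - ζ * y‖ := prod_le_prod (fun _ _ => by positivity) hroot
    _ = |(cycBinaryForm n x y : ℝ)| := (abs_cycBinaryForm_eq_prod (by omega) x y).symm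

lemma abs_log_one_sub_le {u : ℝ} (hu : |u| ≤ 1 / 2) : |Real.log (1 - u)| ≤ 2 * |u| := by
  have h := Real.abs_log_sub_add_sum_range_le (by linarith : |u| < 1) 0
  rw [sum_range_zero, zero_add, zero_add, pow_one] at h
  calc |Real.log (1 - u)| ≤ |u| / (1 - |u|) := h
    _ ≤ 2 * |u| := by rw [div_le_iff₀ (by linarith)]; nlinarith [abs_nonneg u]

lemma abs_log_abs_pow_sub_one_sub_le {t : ℝ} (ht : 2 ≤ |t|) {d : ℕ} (hd : 0 < d) :
    |Real.log (|t ^ d - 1|) - d * Real.log (|t|)| ≤ 2 * (1 / 2) ^ d := by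
  have htd : t ^ d ≠ 0 := pow_ne_zero _ (by rintro rfl; norm_num at ht)
  set u := (t ^ d)⁻¹
  have hu : |u| ≤ (1 / 2) ^ d := by
    rw [abs_inv, abs_pow, ← inv_pow, one_div]
    exact pow_le_pow_left₀ (by positivity) (inv_anti₀ two_pos ht) d
  have hu' : |u| ≤ 1 / 2 := hu.trans (pow_le_of_le_one (by norm_num) (by norm_num) hd.ne')
  have hsub : 1 - u ≠ 0 := by
    intro h
    rw [← sub_eq_zero.1 h, abs_one] at hu'
    norm_num at hu'
  rw [show t ^ d - 1 = t ^ d * (1 - u) by rw [mul_sub, mul_one, mul_inv_cancel₀ htd], abs_mul,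
    Real.log_mul (abs_ne_zero.2 htd) (abs_ne_zero.2 hsub), abs_pow, Real.log_pow,
    add_sub_cancel_left, Real.log_abs]
  exact (abs_log_one_sub_le hu').trans (by gcongr)

lemma eval_cyclotomic_ne_zero {R : Type*} [CommRing R] {n : ℕ} {t : R} (ht : t ^ n ≠ 1) :
    (cyclotomic n R).eval t ≠ 0 := by
  intro h
  have := eval_dvd (x := t) (cyclotomic.dvd_X_pow_sub_one n R)
  rw [h, zero_dvd_iff, eval_sub, eval_pow, eval_X, eval_one, sub_eq_zero] at this
  exact ht this

lemma pow_ne_one_of_one_lt_abs {t : ℝ} (ht : 1 < |t|) {m : ℕ} (hm : m ≠ 0) : t ^ m ≠ 1 := by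
  intro h
  have := congrArg abs h
  rw [abs_pow, abs_one] at this
  exact (one_lt_pow₀ ht hm).ne' this

lemma abs_log_abs_eval_cyclotomic_sub_le {t : ℝ} (ht : 2 ≤ |t|) {n : ℕ} (hn : 0 < n) :
    |Real.log (|(cyclotomic n ℝ).eval t|) - n.totient * Real.log (|t|)| ≤ 4 := by
  set E : ℕ → ℝ := fun m => Real.log |t ^ m - 1| - m * Real.log |t|
  -- `∏_{d ∣ m} Φ_d(t) = t ^ m - 1`, taken in logarithms, so that Möbius inversion applies
  have hdiv : ∀ m > 0,
      ∑ d ∈ m.divisors, (Real.log |(cyclotomic d ℝ).eval t| - d.totient * Real.log |t|) = E m := by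
    intro m hm
    have hprod : ∏ d ∈ m.divisors, (cyclotomic d ℝ).eval t = t ^ m - 1 := by
      rw [← eval_prod, prod_cyclotomic_eq_X_pow_sub_one hm]
      simp
    have hne : ∀ d ∈ m.divisors, |(cyclotomic d ℝ).eval t| ≠ 0 := fun d hd =>
      abs_ne_zero.2 (eval_cyclotomic_ne_zero
        (pow_ne_one_of_one_lt_abs (by linarith) (Nat.pos_of_mem_divisors hd).ne'))
    rw [sum_sub_distrib, ← sum_mul, ← Nat.cast_sum, Nat.sum_totient, ← Real.log_prod hne,
      ← abs_prod, hprod]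
  rw [← (ArithmeticFunction.sum_eq_iff_sum_smul_moebius_eq.1 hdiv) n hn]
  calc |∑ x ∈ n.divisorsAntidiagonal, ArithmeticFunction.moebius x.1 • E x.2|
      ≤ ∑ x ∈ n.divisorsAntidiagonal, |E x.2| := by
        refine (abs_sum_le_sum_abs _ _).trans (sum_le_sum fun x _ => ?_)
        rw [zsmul_eq_mul, abs_mul]
        exact mul_le_of_le_one_left (abs_nonneg _)
          (by exact_mod_cast ArithmeticFunction.abs_moebius_le_one)
    _ = ∑ d ∈ n.divisors, |E d| := Nat.sum_divisorsAntidiagonal' (fun _ d => |E d|)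
    _ ≤ ∑ d ∈ range (n + 1), 2 * (1 / 2 : ℝ) ^ d := by
        refine sum_le_sum_of_subset_of_nonneg
          (fun d hd => mem_range.2 (Nat.lt_succ_of_le (Nat.divisor_le hd))) ?_ |>.trans' ?_
        · exact fun _ _ _ => by positivity
        · exact sum_le_sum fun d hd =>
            abs_log_abs_pow_sub_one_sub_le ht (Nat.pos_of_mem_divisors hd)
    _ ≤ 4 := by rw [← mul_sum]; linarith [sum_geometric_two_le (n + 1)]

lemma exp_neg_four_mul_pow_totient_le_abs_eval_cyclotomic {t : ℝ} (ht : 2 ≤ |t|) {n : ℕ}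
    (hn : 0 < n) : Real.exp (-4) * |t| ^ n.totient ≤ |(cyclotomic n ℝ).eval t| := by
  have hpos : 0 < |(cyclotomic n ℝ).eval t| :=
    abs_pos.2 (eval_cyclotomic_ne_zero (pow_ne_one_of_one_lt_abs (by linarith) hn.ne'))
  have hlog := (abs_le.1 (abs_log_abs_eval_cyclotomic_sub_le ht hn)).1
  calc Real.exp (-4) * |t| ^ n.totient = Real.exp (-4 + n.totient * Real.log |t|) := by
        rw [Real.exp_add, ← Real.log_pow, Real.exp_log (by positivity)]
    _ ≤ Real.exp (Real.log |(cyclotomic n ℝ).eval t|) := Real.exp_le_exp.2 (by linarith)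
    _ = |(cyclotomic n ℝ).eval t| := Real.exp_log hpos

lemma Nat.le_totient_sq_of_odd {n : ℕ} (hn : Odd n) : n ≤ n.totient ^ 2 := by
  induction n using Nat.recOnPosPrimePosCoprime with
  | prime_pow p k hp hk =>
    have hp3 : 3 ≤ p := by
      have : p ≠ 2 := by
        rintro rfl
        exact Nat.not_even_iff_odd.2 hn ((Nat.even_pow' hk.ne').2 even_two)
      have := hp.two_le
      omega
    rw [Nat.totient_prime_pow hp hk]
    calc p ^ k = p ^ (k - 1) * p := by rw [← pow_succ, Nat.sub_add_cancel hk]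
      _ ≤ p ^ (k - 1) * (p ^ (k - 1) * (p - 1) ^ 2) := by
        gcongr
        calc p ≤ (p - 1) ^ 2 := by
              obtain ⟨q, rfl⟩ := Nat.exists_eq_add_of_le hp3
              rw [show 3 + q - 1 = q + 2 by omega]
              nlinarith
          _ ≤ p ^ (k - 1) * (p - 1) ^ 2 := Nat.le_mul_of_pos_left _ (by positivity)
      _ = (p ^ (k - 1) * (p - 1)) ^ 2 := by ring
  | zero => exact absurd hn (by decide)
  | one => simp
  | coprime a b _ _ hab iha ihb =>
    obtain ⟨hao, hbo⟩ := Nat.odd_mul.1 hn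
    rw [Nat.totient_mul hab, mul_pow]
    exact Nat.mul_le_mul (iha hao) (ihb hbo)

lemma Nat.le_two_mul_totient_sq (n : ℕ) : n ≤ 2 * n.totient ^ 2 := by
  rcases eq_or_ne n 0 with rfl | hn
  · simp
  obtain ⟨k, m, hm, rfl⟩ := Nat.exists_eq_two_pow_mul_odd hn
  rw [Nat.totient_mul ((Nat.coprime_two_left.2 hm).pow_left k), mul_pow, ← mul_assoc]
  refine Nat.mul_le_mul ?_ (Nat.le_totient_sq_of_odd hm)
  rcases k with _ | k
  · simp
  · rw [Nat.totient_prime_pow_succ Nat.prime_two, pow_succ]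
    nlinarith [Nat.one_le_two_pow (n := k)]

lemma two_pow_totient_le_cycBinaryForm {n : ℕ} (hn : 2 < n) {x y : ℤ} (h : 3 ≤ max |x| |y|) :
    (2 : ℝ) ^ n.totient ≤ cycBinaryForm n x y := by
  rw [← abs_of_pos (Int.cast_pos.2 (cycBinaryForm_pos hn (by by_contra! h0; simp [h0] at h)))]
  wlog hyx : |y| ≤ |x| generalizing x y
  · rw [← abs_cycBinaryForm_comm (by omega)]
    exact this (by rwa [max_comm]) (le_of_not_ge hyx)
  rw [max_eq_left hyx] at h
  rcases eq_or_ne y 0 with rfl | hy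
  · rw [cycBinaryForm_zero_right, Int.cast_pow, abs_pow, ← Int.cast_abs]
    exact pow_le_pow_left₀ zero_le_two (by exact_mod_cast h.trans' (by norm_num)) _
  · exact two_pow_totient_le_abs_cycBinaryForm hn (by have := Int.one_le_abs hy; omega)

lemma exp_neg_four_mul_two_pow_totient_le_cycBinaryForm {n : ℕ} (hn : 2 < n) {x y : ℤ}
    (h : 2 ≤ max |x| |y|) : Real.exp (-4) * 2 ^ n.totient ≤ cycBinaryForm n x y := by
  rw [← abs_of_pos (Int.cast_pos.2 (cycBinaryForm_pos hn (by by_contra! h0; simp [h0] at h)))]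
  wlog hyx : |y| ≤ |x| generalizing x y
  · rw [← abs_cycBinaryForm_comm (by omega)]
    exact this (by rwa [max_comm]) (le_of_not_ge hyx)
  rw [max_eq_left hyx] at h
  have hx : (2 : ℝ) ≤ |(x : ℝ)| := by exact_mod_cast h
  have hexp : Real.exp (-4) ≤ 1 := Real.exp_le_one_iff.2 (by norm_num)
  rcases eq_or_ne y 0 with rfl | hy
  · rw [cycBinaryForm_zero_right, Int.cast_pow, abs_pow]
    exact (mul_le_of_le_one_left (by positivity) hexp).trans (pow_le_pow_left₀ zero_le_two hx _)
  by_cases hy1 : |y| = 1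
  · have hxy : |((x * y : ℤ) : ℝ)| = |(x : ℝ)| := by
      rw [Int.cast_mul, abs_mul, show |(y : ℝ)| = 1 by exact_mod_cast hy1, mul_one]
    rw [abs_cycBinaryForm_of_abs_eq_one n x hy1]
    calc Real.exp (-4) * 2 ^ n.totient ≤ Real.exp (-4) * |((x * y : ℤ) : ℝ)| ^ n.totient := by
          rw [hxy]; gcongr
      _ ≤ _ := exp_neg_four_mul_pow_totient_le_abs_eval_cyclotomic (hxy ▸ hx) (by omega)
  · have := Int.one_le_abs hy
    exact (two_pow_totient_le_abs_cycBinaryForm hn (by omega)).trans'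
      (mul_le_of_le_one_left (by positivity) hexp)

lemma max_abs_eq_two_of_cycBinaryForm_le {θ : ℝ} (hθ : θ < 1) {n : ℕ} (hn : 3 ≤ n) {x y : ℤ}
    (h : 2 ≤ max |x| |y|) (hle : (cycBinaryForm n x y : ℝ) ≤ 2 ^ (θ * n.totient)) :
    max |x| |y| = 2 := by
  by_contra hne
  have hlow := two_pow_totient_le_cycBinaryForm (x := x) (y := y) hn (by omega)
  have hφ : (0 : ℝ) < n.totient := by exact_mod_cast Nat.totient_pos.2 (by omega)
  have : (2 : ℝ) ^ (θ * n.totient) < 2 ^ n.totient := by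
    rw [← Real.rpow_natCast]
    exact Real.rpow_lt_rpow_of_exponent_lt one_lt_two (by nlinarith)
  linarith

lemma totient_le_of_cycBinaryForm_le {θ : ℝ} (hθ : θ < 1) {n : ℕ} (hn : 3 ≤ n) {x y : ℤ}
    (h : 2 ≤ max |x| |y|) (hle : (cycBinaryForm n x y : ℝ) ≤ 2 ^ (θ * n.totient)) :
    (n.totient : ℝ) ≤ 4 / ((1 - θ) * Real.log 2) := by
  have hlog := Real.log_le_log (by positivity)
    ((exp_neg_four_mul_two_pow_totient_le_cycBinaryForm hn h).trans hle)
  rw [Real.log_mul (Real.exp_ne_zero _) (by positivity), Real.log_exp, Real.log_pow,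
    Real.log_rpow two_pos] at hlog
  have hlog2 := Real.log_pos one_lt_two
  rw [le_div_iff₀ (by nlinarith)]
  nlinarith

theorem stmt4_general (θ : ℝ) (hθ1 : θ < 1) :
    {T : ℕ × ℤ × ℤ | 3 ≤ T.1 ∧ 2 ≤ max |T.2.1| |T.2.2| ∧
      (cycBinaryForm T.1 T.2.1 T.2.2 : ℝ) ≤ 2 ^ (θ * T.1.totient)}.Finite ∧
    ∀ T : ℕ × ℤ × ℤ, 3 ≤ T.1 → 2 ≤ max |T.2.1| |T.2.2| →
      (cycBinaryForm T.1 T.2.1 T.2.2 : ℝ) ≤ 2 ^ (θ * T.1.totient) →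
      max |T.2.1| |T.2.2| = 2 := by
  refine ⟨?_, fun T hn h hle => max_abs_eq_two_of_cycBinaryForm_le hθ1 hn h hle⟩
  set K := ⌊4 / ((1 - θ) * Real.log 2)⌋₊
  refine ((Set.finite_Iic (2 * K ^ 2)).prod
    ((Set.finite_Icc (-2 : ℤ) 2).prod (Set.finite_Icc (-2 : ℤ) 2))).subset ?_
  rintro ⟨n, x, y⟩ ⟨hn, h, hle⟩
  have hmax := max_abs_eq_two_of_cycBinaryForm_le hθ1 hn h hle
  have hK : n.totient ≤ K := Nat.le_floor (totient_le_of_cycBinaryForm_le hθ1 hn h hle)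
  refine ⟨(Nat.le_two_mul_totient_sq n).trans (by gcongr), abs_le.1 ?_, abs_le.1 ?_⟩
  · exact hmax ▸ le_max_left _ _
  · exact hmax ▸ le_max_right _ _

theorem stmt4 (θ : ℝ) (hθ0 : 0 < θ) (hθ1 : θ < 1) :
    {T : ℕ × ℤ × ℤ | 3 ≤ T.1 ∧ 2 ≤ max |T.2.1| |T.2.2| ∧
      (cycBinaryForm T.1 T.2.1 T.2.2 : ℝ) ≤ 2 ^ (θ * T.1.totient)}.Finite ∧
    ∀ T : ℕ × ℤ × ℤ, 3 ≤ T.1 → 2 ≤ max |T.2.1| |T.2.2| →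
      (cycBinaryForm T.1 T.2.1 T.2.2 : ℝ) ≤ 2 ^ (θ * T.1.totient) →
      max |T.2.1| |T.2.2| = 2 :=
  stmt4_general θ hθ1
end

section
/- For every n ≥ 3, one has c_n ≥ (√3/2)^{φ(n)}. This lower bound is best possible, with equality for n = 3 (where c_3 = 3/4). -/
/-!
On `[-1, 1]` the bound is proved by strong induction on `n`. If `p ∣ m` then
`φ_{mp}(t) = φ_m(t^p)`, and if `m > 1` is odd then `φ_{2m}(t) = φ_m(-t)`. If `p ∤ m` then
`φ_{mp}(t) φ_m(t) = φ_m(t^p)`; dividing by `φ_m(t) ≤ 2^{φ(m)}` costs a factor `2^{φ(m)}`,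
while the target exponent grows by `(p - 2) φ(m)`, and `(√3/2)^{p-2} ≤ 1/2` once `p ≥ 7`.
What is left are the primes `p ≥ 7`, where `φ_p(t) = (1 - t^p)/(1 - t) ≥ 1/2`, and
`n ∈ {3, 4, 5, 15}`. Outside `[-1, 1]` the palindromic identity `φ_n(t) = t^{φ(n)} φ_n(1/t)`
brings `t` back inside. For `n = 3`, `t² + t + 1` attains `3/4` at `t = -1/2`.
-/

/-- `cₙ`: the infimum over the reals of the cyclotomic polynomial `φₙ`. -/
noncomputable def cycInf (n : ℕ) : ℝ :=
  sInf (Set.range fun t : ℝ => (Polynomial.cyclotomic n ℝ).eval t)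

open Polynomial Finset
open scoped Nat

lemma IsPrimitiveRoot.neg_of_odd {R : Type*} [CommRing R] [CharZero R] {ζ : R} {m : ℕ}
    (h : IsPrimitiveRoot ζ m) (hm : Odd m) : IsPrimitiveRoot (-ζ) (2 * m) := by
  convert IsPrimitiveRoot.orderOf (-ζ)
  rw [neg_eq_neg_one_mul, (Commute.all _ _).orderOf_mul_eq_mul_orderOf_of_coprime]
  · simp [h.eq_orderOf]
  · simp [← h.eq_orderOf, hm]

namespace Complex

lemma primitiveRoots_two_mul_of_odd {m : ℕ} (hm : Odd m) :
    primitiveRoots (2 * m) ℂ = (primitiveRoots m ℂ).image Neg.neg := by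
  refine (eq_of_subset_of_card_le (fun ν hν => ?_) ?_).symm
  · obtain ⟨μ, hμ, rfl⟩ := mem_image.mp hν
    exact (mem_primitiveRoots (by have := hm.pos; omega)).mpr
      (((mem_primitiveRoots hm.pos).mp hμ).neg_of_odd hm)
  · rw [card_image_of_injective _ neg_injective, card_primitiveRoots, card_primitiveRoots,
      Nat.totient_mul (Nat.coprime_two_left.mpr hm), Nat.totient_two, one_mul]

lemma cyclotomic_eval_eq_prod_primitiveRoots {n : ℕ} (hn : n ≠ 0) (z : ℂ) :
    eval z (cyclotomic n ℂ) = ∏ μ ∈ primitiveRoots n ℂ, (z - μ) := by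
  simp [cyclotomic_eq_prod_X_sub_primitiveRoots (isPrimitiveRoot_exp n hn), eval_prod]

lemma cyclotomic_eval_two_mul_of_odd {m : ℕ} (hm : Odd m) (hm1 : m ≠ 1) (z : ℂ) :
    eval z (cyclotomic (2 * m) ℂ) = eval (-z) (cyclotomic m ℂ) := by
  have hm0 : m ≠ 0 := by rintro rfl; simp at hm
  rw [cyclotomic_eval_eq_prod_primitiveRoots (by omega), cyclotomic_eval_eq_prod_primitiveRoots hm0,
    primitiveRoots_two_mul_of_odd hm, prod_image (fun x _ y _ h => neg_injective h)]
  simp_rw [sub_neg_eq_add, ← neg_add', prod_neg, card_primitiveRoots,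
    (Nat.totient_even (n := m) (by obtain ⟨k, rfl⟩ := hm; omega)).neg_one_pow, one_mul]

lemma cyclotomic_eval_eq_pow_mul_eval_inv {n : ℕ} (hn : 1 < n) {z : ℂ} (hz : z ≠ 0) :
    eval z (cyclotomic n ℂ) = z ^ φ n * eval z⁻¹ (cyclotomic n ℂ) := by
  have hn0 : n ≠ 0 := by omega
  have hpos : 0 < n := by omega
  have hprod_neg : ∏ μ ∈ primitiveRoots n ℂ, -μ = 1 := by
    have h := cyclotomic_coeff_zero ℂ hn
    rw [coeff_zero_eq_eval_zero, cyclotomic_eval_eq_prod_primitiveRoots hn0] at h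
    simpa only [zero_sub] using h
  have hprod_inv :
      ∏ μ ∈ primitiveRoots n ℂ, (z - μ⁻¹) = ∏ μ ∈ primitiveRoots n ℂ, (z - μ) :=
    prod_nbij' Inv.inv Inv.inv
      (fun μ hμ => (mem_primitiveRoots hpos).mpr ((mem_primitiveRoots hpos).mp hμ).inv)
      (fun μ hμ => (mem_primitiveRoots hpos).mpr ((mem_primitiveRoots hpos).mp hμ).inv)
      (fun μ _ => inv_inv μ) (fun μ _ => inv_inv μ) (fun _ _ => rfl)
  rw [cyclotomic_eval_eq_prod_primitiveRoots hn0, cyclotomic_eval_eq_prod_primitiveRoots hn0,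
    ← card_primitiveRoots, ← prod_const, ← prod_mul_distrib, ← hprod_inv,
    ← one_mul (∏ _ ∈ _, _), ← hprod_neg, ← prod_mul_distrib]
  refine prod_congr rfl fun μ hμ => ?_
  have : μ ≠ 0 := ((mem_primitiveRoots hpos).mp hμ).ne_zero hn0
  field_simp
  ring

end Complex

namespace Polynomial

lemma cyclotomic_eval_two_mul_of_odd {m : ℕ} (hm : Odd m) (hm1 : m ≠ 1) (t : ℝ) :
    eval t (cyclotomic (2 * m) ℝ) = eval (-t) (cyclotomic m ℝ) := by
  have h := Complex.cyclotomic_eval_two_mul_of_odd hm hm1 (t : ℂ)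
  rw [← Complex.ofReal_neg, cyclotomic.eval_apply_ofReal, cyclotomic.eval_apply_ofReal] at h
  exact_mod_cast h

lemma cyclotomic_eval_eq_pow_mul_eval_inv {n : ℕ} (hn : 1 < n) {t : ℝ} (ht : t ≠ 0) :
    eval t (cyclotomic n ℝ) = t ^ φ n * eval t⁻¹ (cyclotomic n ℝ) := by
  have h := Complex.cyclotomic_eval_eq_pow_mul_eval_inv hn (Complex.ofReal_ne_zero.mpr ht)
  rw [← Complex.ofReal_inv, cyclotomic.eval_apply_ofReal, cyclotomic.eval_apply_ofReal] at h
  exact_mod_cast h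

lemma abs_cyclotomic_eval_le_two_pow {n : ℕ} (hn : n ≠ 0) {t : ℝ} (ht : |t| ≤ 1) :
    |eval t (cyclotomic n ℝ)| ≤ 2 ^ φ n := by
  rw [← Real.norm_eq_abs, ← Complex.norm_real, ← cyclotomic.eval_apply_ofReal,
    Complex.cyclotomic_eval_eq_prod_primitiveRoots hn, ← Complex.card_primitiveRoots,
    ← prod_const]
  refine (Finset.norm_prod_le _ _).trans (prod_le_prod (fun _ _ => norm_nonneg _) fun μ hμ => ?_)
  calc ‖(t : ℂ) - μ‖ ≤ ‖(t : ℂ)‖ + ‖μ‖ := norm_sub_le _ _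
    _ ≤ 1 + 1 := by
      rw [Complex.norm_real, ((mem_primitiveRoots (Nat.pos_of_ne_zero hn)).mp hμ).norm'_eq_one hn]
      exact add_le_add ht le_rfl
    _ = 2 := one_add_one_eq_two

end Polynomial

lemma abs_pow_le_one {R : Type*} [Ring R] [LinearOrder R] [IsStrictOrderedRing R] {t : R}
    (ht : |t| ≤ 1) (p : ℕ) : |t ^ p| ≤ 1 := by
  rw [abs_pow]
  exact pow_le_one₀ (abs_nonneg t) ht

lemma one_half_le_geom_sum_of_odd {n : ℕ} (hn : Odd n) {t : ℝ} (ht : -1 ≤ t) :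
    1 / 2 ≤ ∑ i ∈ range n, t ^ i := by
  rcases le_or_gt 0 t with h0 | h0
  · have := single_le_sum (f := fun i => t ^ i) (fun i _ => pow_nonneg h0 i) (mem_range.mpr hn.pos)
    simp only [pow_zero] at this
    linarith
  · have hmul := geom_sum_mul_neg t n
    have htn : t ^ n ≤ 0 := hn.pow_nonpos h0.le
    nlinarith

lemma dvd_fifteen_of_squarefree_of_odd {n : ℕ} (hsf : Squarefree n) (hodd : Odd n)
    (hsmall : ∀ p, p.Prime → p ∣ n → p < 7) : n ∣ 15 := by
  have hsub : n.primeFactors ⊆ {3, 5} := by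
    intro q hq
    have hqp := Nat.prime_of_mem_primeFactors hq
    have hqn := Nat.dvd_of_mem_primeFactors hq
    have hq2 : q ≠ 2 := by
      rintro rfl
      exact Nat.not_even_iff_odd.mpr hodd (even_iff_two_dvd.mpr hqn)
    have hq7 := hsmall q hqp hqn
    interval_cases q <;> simp_all <;> norm_num at hqp
  calc n = ∏ q ∈ n.primeFactors, q := (Nat.prod_primeFactors_of_squarefree hsf).symm
    _ ∣ ∏ q ∈ {3, 5}, q := prod_dvd_prod_of_subset _ _ _ hsub
    _ = 15 := rfl

local notation "β" => Real.sqrt 3 / 2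

lemma sqrt_three_div_two_sq : β ^ 2 = 3 / 4 := by
  rw [div_pow, Real.sq_sqrt (by norm_num)]
  norm_num

lemma sqrt_three_div_two_le_one : β ≤ 1 := by
  nlinarith [sqrt_three_div_two_sq]

lemma sqrt_three_div_two_pow_six_le : β ^ 6 ≤ β / 2 := by
  have h : β ^ 6 = (3 / 4) ^ 3 := by rw [← sqrt_three_div_two_sq, ← pow_mul]
  have : (27 / 16 : ℝ) ≤ Real.sqrt 3 := Real.le_sqrt_of_sq_le (by norm_num)
  rw [h]
  linarith

lemma sqrt_three_div_two_pow_le_pow {k l : ℕ} (hkl : k ≤ l) : β ^ l ≤ β ^ k :=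
  pow_le_pow_of_le_one (by positivity) sqrt_three_div_two_le_one hkl

lemma sqrt_three_div_two_pow_totient_three : β ^ φ 3 = 3 / 4 := by
  rw [Nat.totient_prime Nat.prime_three, sqrt_three_div_two_sq]

lemma three_div_four_le_cyclotomic_three_eval (t : ℝ) : 3 / 4 ≤ eval t (cyclotomic 3 ℝ) := by
  rw [cyclotomic_three]
  simp only [eval_add, eval_pow, eval_X, eval_one]
  nlinarith [sq_nonneg (t + 1 / 2)]

def SqrtThreeBound (n : ℕ) : Prop :=
  ∀ t : ℝ, |t| ≤ 1 → β ^ φ n ≤ eval t (cyclotomic n ℝ)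

lemma SqrtThreeBound.mul_of_dvd {m p : ℕ} (hm : SqrtThreeBound m) (hp : p.Prime) (hpm : p ∣ m) :
    SqrtThreeBound (m * p) := by
  intro t ht
  rw [← cyclotomic_expand_eq_cyclotomic hp hpm, expand_eval]
  calc β ^ φ (m * p) ≤ β ^ φ m := by
        rw [mul_comm, Nat.totient_mul_of_prime_of_dvd hp hpm]
        exact sqrt_three_div_two_pow_le_pow (Nat.le_mul_of_pos_left _ hp.pos)
    _ ≤ _ := hm _ (abs_pow_le_one ht p)

lemma SqrtThreeBound.two_mul {m : ℕ} (hm : SqrtThreeBound m) (hodd : Odd m) (hm1 : m ≠ 1) :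
    SqrtThreeBound (2 * m) := by
  intro t ht
  rw [cyclotomic_eval_two_mul_of_odd hodd hm1, Nat.totient_mul (Nat.coprime_two_left.mpr hodd),
    Nat.totient_two, one_mul]
  exact hm _ (by rwa [abs_neg])

lemma SqrtThreeBound.mul_prime {m p : ℕ} (hm : SqrtThreeBound m) (hm0 : m ≠ 0) (hp : p.Prime)
    (hp7 : 7 ≤ p) (hpm : ¬p ∣ m) : SqrtThreeBound (m * p) := by
  intro t ht
  have hfactor : eval (t ^ p) (cyclotomic m ℝ) =
      eval t (cyclotomic (m * p) ℝ) * eval t (cyclotomic m ℝ) := by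
    rw [← expand_eval, cyclotomic_expand_eq_cyclotomic_mul hp hpm, eval_mul]
  have hpos : 0 < eval t (cyclotomic (m * p) ℝ) :=
    cyclotomic_pos (by nlinarith [Nat.pos_of_ne_zero hm0]) t
  have hupper := (le_abs_self _).trans (abs_cyclotomic_eval_le_two_pow hm0 ht)
  have hbase : 2 * β ^ (p - 1) ≤ β := by
    linarith [sqrt_three_div_two_pow_le_pow (show 6 ≤ p - 1 by omega),
      sqrt_three_div_two_pow_six_le]
  refine le_of_mul_le_mul_left ?_ (by positivity : (0 : ℝ) < 2 ^ φ m)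
  calc 2 ^ φ m * β ^ φ (m * p) = (2 * β ^ (p - 1)) ^ φ m := by
        rw [mul_comm m, Nat.totient_mul_of_prime_of_not_dvd hp hpm, mul_pow, ← pow_mul,
          mul_comm (p - 1)]
    _ ≤ β ^ φ m := pow_le_pow_left₀ (by positivity) hbase _
    _ ≤ eval (t ^ p) (cyclotomic m ℝ) := hm _ (abs_pow_le_one ht p)
    _ ≤ 2 ^ φ m * eval t (cyclotomic (m * p) ℝ) := by
        rw [hfactor, mul_comm]
        exact mul_le_mul_of_nonneg_right hupper hpos.le

lemma sqrtThreeBound_prime {p : ℕ} (hp : p.Prime) (hp7 : 7 ≤ p) : SqrtThreeBound p := by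
  have := Fact.mk hp
  intro t ht
  rw [cyclotomic_prime, eval_geom_sum, Nat.totient_prime hp]
  calc β ^ (p - 1) ≤ β ^ 6 := sqrt_three_div_two_pow_le_pow (by omega)
    _ ≤ β / 2 := sqrt_three_div_two_pow_six_le
    _ ≤ 1 / 2 := by linarith [sqrt_three_div_two_le_one]
    _ ≤ _ := one_half_le_geom_sum_of_odd (hp.odd_of_ne_two (by omega)) (neg_le_of_abs_le ht)

lemma sqrtThreeBound_three : SqrtThreeBound 3 := fun t _ =>
  sqrt_three_div_two_pow_totient_three ▸ three_div_four_le_cyclotomic_three_eval t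

lemma sqrtThreeBound_four : SqrtThreeBound 4 := by
  intro t _
  rw [show 4 = 2 * 2 from rfl, ← cyclotomic_expand_eq_cyclotomic Nat.prime_two dvd_rfl,
    expand_eval, cyclotomic_two]
  simp only [eval_add, eval_X, eval_one]
  nlinarith [pow_le_one₀ (by positivity) sqrt_three_div_two_le_one (n := φ (2 * 2)),
    sq_nonneg t]

lemma sqrtThreeBound_five : SqrtThreeBound 5 := by
  have := Fact.mk Nat.prime_five
  intro t ht
  rw [cyclotomic_prime, eval_geom_sum, Nat.totient_prime Nat.prime_five,
    show 5 - 1 = 2 * 2 from rfl, pow_mul, sqrt_three_div_two_sq]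
  simp only [sum_range_succ, sum_range_zero]
  nlinarith [sq_nonneg (t ^ 2 + t / 2), sq_nonneg (t + 2 / 3)]

lemma sqrtThreeBound_fifteen : SqrtThreeBound 15 := by
  intro t ht
  obtain ⟨ht1, ht2⟩ := abs_le.mp ht
  have hfactor : eval (t ^ 5) (cyclotomic 3 ℝ) =
      eval t (cyclotomic 15 ℝ) * eval t (cyclotomic 3 ℝ) := by
    rw [← expand_eval, cyclotomic_expand_eq_cyclotomic_mul Nat.prime_five (by norm_num), eval_mul]
  have hpos : 0 < eval t (cyclotomic 3 ℝ) := cyclotomic_pos (by norm_num) t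
  have hthird : eval t (cyclotomic 3 ℝ) / 3 ≤ eval (t ^ 5) (cyclotomic 3 ℝ) := by
    simp only [cyclotomic_three, eval_add, eval_pow, eval_X, eval_one]
    rcases le_total 0 t with h0 | h0
    · nlinarith [pow_nonneg h0 5, pow_le_one₀ h0 ht2 (n := 2)]
    · nlinarith [sq_nonneg (t ^ 5 + 1 / 2)]
  -- `φ₁₅(t) ≥ 1/3 ≥ (3/4)^4`
  rw [show φ 15 = 2 * 4 from rfl, pow_mul, sqrt_three_div_two_sq]
  nlinarith

lemma sqrtThreeBound_of_three_le {n : ℕ} (hn : 3 ≤ n) : SqrtThreeBound n := by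
  induction n using Nat.strong_induction_on with
  | _ n ih =>
  by_cases hsf : Squarefree n
  · rcases Nat.even_or_odd n with ⟨m, rfl⟩ | hodd
    · have hodd : Odd m := Nat.not_even_iff_odd.mp fun ⟨k, hk⟩ =>
        Nat.isUnit_iff.not.mpr (by norm_num) (hsf 2 ⟨k, by omega⟩)
      rw [← two_mul]
      exact (ih m (by omega) (by obtain ⟨k, rfl⟩ := hodd; omega)).two_mul hodd (by omega)
    · by_cases hlarge : ∃ p, p.Prime ∧ p ∣ n ∧ 7 ≤ p
      · obtain ⟨p, hp, ⟨m, rfl⟩, hp7⟩ := hlarge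
        rcases eq_or_ne m 1 with rfl | hm1
        · simpa using sqrtThreeBound_prime hp hp7
        have hpm : ¬p ∣ m := fun ⟨k, hk⟩ =>
          hp.not_isUnit (hsf p ⟨k, by rw [hk, mul_assoc]⟩)
        have hm3 : 3 ≤ m := by
          obtain ⟨k, rfl⟩ := (Nat.odd_mul.mp hodd).2
          omega
        rw [mul_comm]
        exact (ih m (by nlinarith) hm3).mul_prime (by omega) hp hp7 hpm
      · push Not at hlarge
        have hmem : n ∈ ({1, 3, 5, 15} : Finset ℕ) := by
          rw [← show Nat.divisors 15 = {1, 3, 5, 15} from rfl]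
          exact Nat.mem_divisors.mpr
            ⟨dvd_fifteen_of_squarefree_of_odd hsf hodd hlarge, by norm_num⟩
        simp only [mem_insert, mem_singleton] at hmem
        rcases hmem with rfl | rfl | rfl | rfl
        · omega
        · exact sqrtThreeBound_three
        · exact sqrtThreeBound_five
        · exact sqrtThreeBound_fifteen
  · obtain ⟨p, hp, m, rfl⟩ : ∃ p, p.Prime ∧ p * p ∣ n := by
      simpa [Nat.squarefree_iff_prime_squarefree] using hsf
    rw [mul_right_comm]
    rcases lt_or_ge (p * m) 3 with hsmall | hpm3
    · obtain ⟨rfl, rfl⟩ : p = 2 ∧ m = 1 := by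
        have hm : 0 < m := Nat.pos_of_ne_zero (by rintro rfl; simp at hn)
        have := hp.two_le
        have : m < 2 := by nlinarith
        have : p < 3 := by nlinarith
        omega
      exact sqrtThreeBound_four
    · exact (ih (p * m) (by nlinarith [hp.two_le]) hpm3).mul_of_dvd hp (dvd_mul_right p m)

theorem sqrt_three_div_two_pow_totient_le_cyclotomic_eval {n : ℕ} (hn : 3 ≤ n) (t : ℝ) :
    β ^ φ n ≤ eval t (cyclotomic n ℝ) := by
  rcases le_or_gt |t| 1 with ht | ht
  · exact sqrtThreeBound_of_three_le hn t ht
  have ht0 : t ≠ 0 := by rintro rfl; norm_num at ht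
  have hinv : |t⁻¹| ≤ 1 := by
    rw [abs_inv]
    exact inv_le_one_of_one_le₀ ht.le
  have hbound := sqrtThreeBound_of_three_le hn t⁻¹ hinv
  rw [cyclotomic_eval_eq_pow_mul_eval_inv (by omega) ht0]
  refine hbound.trans (le_mul_of_one_le_left (hbound.trans' (by positivity)) ?_)
  rw [← (Nat.totient_even (by omega : 2 < n)).pow_abs]
  exact one_le_pow₀ ht.le

theorem stmt15 :
    (∀ n : ℕ, 3 ≤ n → (Real.sqrt 3 / 2) ^ n.totient ≤ cycInf n) ∧
    cycInf 3 = (Real.sqrt 3 / 2) ^ Nat.totient 3 ∧ cycInf 3 = 3 / 4 := by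
  have hlower (n : ℕ) (hn : 3 ≤ n) : (Real.sqrt 3 / 2) ^ n.totient ≤ cycInf n :=
    le_csInf (Set.range_nonempty _)
      (Set.forall_mem_range.mpr (sqrt_three_div_two_pow_totient_le_cyclotomic_eval hn))
  have hcyc3 : cycInf 3 = 3 / 4 := by
    refine le_antisymm (csInf_le ⟨3 / 4, Set.forall_mem_range.mpr
      three_div_four_le_cyclotomic_three_eval⟩ ⟨-1 / 2, ?_⟩)
      (sqrt_three_div_two_pow_totient_three ▸ hlower 3 le_rfl)
    simp only [cyclotomic_three, eval_add, eval_pow, eval_X, eval_one]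
    norm_num
  exact ⟨hlower, hcyc3.trans sqrt_three_div_two_pow_totient_three.symm, hcyc3⟩
end
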